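/- arXiv:1005.2394 — 2 statements merged into one kernel-verified Lean document; each statement's English description precedes it below -/
import Mathlib

section
/- Let d ≥ 1, b > 1 real, w a permutation of {1,…,d}, and T ⊆ {1,…,d} with s = #T. Define ρ⃗_w ∈ ℝ^d by (ρ⃗_w)_i = (b−1)·∑_{n=1}^{∞} (d+1−i−wⁿ(i))/bⁿ and f_T(y) = (y₁+⋯+y_s) − b·∑_{t∈T} y_{d+1−t} − s(d−s) + b·(∑_{t∈T} t − s(s+1)/2). Then f_T(ρ⃗_w)/(b−1) = ∑_{n=0}^{∞} b^{−n} · ( ∑_{t∈T} w^{n+1}(d+1−t) − ∑_{i=1}^{s} wⁿ(i) ). -/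
/-! Writing `A_j = ∑_{n ≥ 1} wⁿ(j) / bⁿ` (`orbitTail w b j`), which converges because the orbit
of `j` stays in `{1, …, d}`, one has `ρ_j = (d + 1 - j) - (b - 1) A_j`. The right-hand side splits
termwise into `b ∑_{t ∈ T} A_{d+1-t} - ∑_{i ≤ s} (i + A_i)`, and substituting `ρ` into `f_T` gives
`b - 1` times the same expression. -/

/-- The affine functional `f_T(y) = (y₁+⋯+y_s) − b·∑_{t∈T} y_{d+1−t} − s(d−s)
+ b·(∑_{t∈T} t − s(s+1)/2)`, where `s = #T`. -/
noncomputable def fT (d : ℕ) (b : ℝ) (T : Finset ℕ) (y : ℕ → ℝ) : ℝ :=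
  (∑ i ∈ Finset.Icc 1 T.card, y i) - b * ∑ t ∈ T, y (d + 1 - t)
    - T.card * ((d : ℝ) - T.card)
    + b * ((∑ t ∈ T, (t : ℝ)) - T.card * (T.card + 1) / 2)

open Finset

theorem sum_Icc_one_natCast {K : Type*} [Field K] [CharZero K] (s : ℕ) :
    ∑ i ∈ Icc 1 s, (i : K) = s * (s + 1) / 2 := by
  induction s with
  | zero => simp
  | succ s ih =>
    rw [sum_Icc_succ_top (by omega), ih]
    push_cast
    ring

section GeometricWeights

variable {b : ℝ}

theorem summable_div_pow_of_abs_le (hb : 1 < b) {x : ℕ → ℝ} {C : ℝ} (hx : ∀ n, |x n| ≤ C) :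
    Summable fun n => x n / b ^ n := by
  have hb0 : 0 < b := zero_lt_one.trans hb
  refine .of_norm_bounded ((summable_geometric_of_lt_one (inv_nonneg.2 hb0.le)
    (inv_lt_one_of_one_lt₀ hb)).mul_left C) fun n => ?_
  rw [Real.norm_eq_abs, abs_div, abs_of_pos (pow_pos hb0 n), inv_pow, ← div_eq_mul_inv]
  exact div_le_div_of_nonneg_right (hx n) (pow_nonneg hb0.le n)

theorem hasSum_const_div_pow_succ (hb : 1 < b) (c : ℝ) :
    HasSum (fun n : ℕ => c / b ^ (n + 1)) (c / (b - 1)) := by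
  have hb0 : 0 < b := zero_lt_one.trans hb
  have hb1 : b - 1 ≠ 0 := by linarith
  have h := (hasSum_geometric_of_lt_one (inv_nonneg.2 hb0.le)
    (inv_lt_one_of_one_lt₀ hb)).mul_left (c / b)
  have hsum : c / b * (1 - b⁻¹)⁻¹ = c / (b - 1) := by field_simp
  have hterm : (fun n : ℕ => c / b * b⁻¹ ^ n) = fun n => c / b ^ (n + 1) := by
    ext n; rw [pow_succ, inv_pow]; field_simp
  rwa [hsum, hterm] at h

theorem HasSum.div_pow_of_div_pow_succ {y : ℕ → ℝ} {A : ℝ}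
    (h : HasSum (fun n => y n / b ^ (n + 1)) A) (hb : b ≠ 0) :
    HasSum (fun n => y n / b ^ n) (b * A) := by
  have hterm : (fun n => b * (y n / b ^ (n + 1))) = fun n => y n / b ^ n := by
    ext n; rw [pow_succ]; field_simp
  simpa only [hterm] using h.mul_left b

theorem HasSum.const_sub_div_pow_succ {y : ℕ → ℝ} {A : ℝ}
    (h : HasSum (fun n => y n / b ^ (n + 1)) A) (hb : 1 < b) (c : ℝ) :
    HasSum (fun n => (c - y n) / b ^ (n + 1)) (c / (b - 1) - A) := by
  simpa only [sub_div] using (hasSum_const_div_pow_succ hb c).sub h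

end GeometricWeights

noncomputable def orbitTail (w : ℕ → ℕ) (b : ℝ) (j : ℕ) : ℝ :=
  ∑' n : ℕ, (w^[n + 1] j : ℝ) / b ^ (n + 1)

section Orbit

variable {d : ℕ} {w : ℕ → ℕ} {b : ℝ}

theorem hasSum_orbitTail (hw : Set.MapsTo w (Set.Icc 1 d) (Set.Icc 1 d)) (hb : 1 < b) {j : ℕ}
    (hj : j ∈ Set.Icc 1 d) :
    HasSum (fun n => (w^[n + 1] j : ℝ) / b ^ (n + 1)) (orbitTail w b j) := by
  have hbound : ∀ n, |(w^[n] j : ℝ)| ≤ d := fun n => by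
    rw [Nat.abs_cast, Nat.cast_le]
    exact (hw.iterate n hj).2
  exact ((summable_nat_add_iff (f := fun m => (w^[m] j : ℝ) / b ^ m) 1).mpr
    (summable_div_pow_of_abs_le hb hbound)).hasSum

theorem mul_tsum_sub_iterate_div_pow_succ (hw : Set.MapsTo w (Set.Icc 1 d) (Set.Icc 1 d))
    (hb : 1 < b) {j : ℕ} (hj : j ∈ Set.Icc 1 d) (c : ℝ) :
    (b - 1) * ∑' n : ℕ, (c - (w^[n + 1] j : ℝ)) / b ^ (n + 1) = c - (b - 1) * orbitTail w b j := by
  have hb1 : b - 1 ≠ 0 := by linarith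
  rw [((hasSum_orbitTail hw hb hj).const_sub_div_pow_succ hb c).tsum_eq]
  field_simp

theorem hasSum_sum_iterate_succ_div_pow (hw : Set.MapsTo w (Set.Icc 1 d) (Set.Icc 1 d))
    (hb : 1 < b) {ι : Type*} {S : Finset ι} {φ : ι → ℕ} (hφ : ∀ t ∈ S, φ t ∈ Set.Icc 1 d) :
    HasSum (fun n => (∑ t ∈ S, (w^[n + 1] (φ t) : ℝ)) / b ^ n)
      (b * ∑ t ∈ S, orbitTail w b (φ t)) := by
  rw [mul_sum]
  simpa only [sum_div] using hasSum_sum fun t ht =>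
    (hasSum_orbitTail hw hb (hφ t ht)).div_pow_of_div_pow_succ (by linarith)

theorem hasSum_sum_iterate_div_pow (hw : Set.MapsTo w (Set.Icc 1 d) (Set.Icc 1 d))
    (hb : 1 < b) {S : Finset ℕ} (hS : ∀ i ∈ S, i ∈ Set.Icc 1 d) :
    HasSum (fun n => (∑ i ∈ S, (w^[n] i : ℝ)) / b ^ n) (∑ i ∈ S, ((i : ℝ) + orbitTail w b i)) := by
  simpa only [sum_div] using hasSum_sum fun i hi => by
    simpa only [Function.iterate_zero_apply, pow_zero, div_one] using
      (hasSum_orbitTail hw hb (hS i hi)).zero_add (f := fun n => (w^[n] i : ℝ) / b ^ n)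

end Orbit

/-- The terms free of `A` cancel by Gauss's formula for `∑_{i ≤ #T} i`. -/
theorem fT_eq_of_eq_sub_mul {d : ℕ} {b : ℝ} {T : Finset ℕ} (hT : T ⊆ Icc 1 d) {y A : ℕ → ℝ}
    (hy : ∀ j ∈ Set.Icc 1 d, y j = (d + 1 - j) - (b - 1) * A j) :
    fT d b T y = (b - 1) * (b * ∑ t ∈ T, A (d + 1 - t)
      - (T.card * (T.card + 1) / 2 + ∑ i ∈ Icc 1 T.card, A i)) := by
  have hcard : T.card ≤ d := by simpa using card_le_card hT
  have hyS : ∑ i ∈ Icc 1 T.card, y i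
      = T.card * (d + 1) - T.card * (T.card + 1) / 2 - (b - 1) * ∑ i ∈ Icc 1 T.card, A i := by
    rw [sum_congr rfl fun i hi => hy i (by simp only [mem_Icc, Set.mem_Icc] at hi ⊢; omega),
      sum_sub_distrib, sum_sub_distrib, ← mul_sum, sum_Icc_one_natCast, sum_const, Nat.card_Icc,
      add_tsub_cancel_right, nsmul_eq_mul]
  have hyT : ∑ t ∈ T, y (d + 1 - t) = ∑ t ∈ T, (t : ℝ) - (b - 1) * ∑ t ∈ T, A (d + 1 - t) := by
    rw [mul_sum, ← sum_sub_distrib]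
    refine sum_congr rfl fun t ht => ?_
    have ht' := mem_Icc.mp (hT ht)
    rw [hy _ (by simp only [Set.mem_Icc]; omega), Nat.cast_sub (by omega)]
    push_cast
    ring
  rw [fT, hyS, hyT]
  ring

theorem fT_rho_w_eq_general (d : ℕ) (b : ℝ) (hb : 1 < b)
    (w : ℕ → ℕ) (hw : Set.BijOn w (Set.Icc 1 d) (Set.Icc 1 d))
    (T : Finset ℕ) (hT : T ⊆ Finset.Icc 1 d)
    (ρ : ℕ → ℝ)
    (hρ : ∀ i, ρ i = (b - 1) *
      ∑' n : ℕ, (((d : ℝ) + 1 - (i : ℝ)) - (w^[n + 1] i : ℝ)) / b ^ (n + 1)) :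
    fT d b T ρ / (b - 1) =
      ∑' n : ℕ, ((∑ t ∈ T, (w^[n + 1] (d + 1 - t) : ℝ)) -
        ∑ i ∈ Finset.Icc 1 T.card, (w^[n] i : ℝ)) / b ^ n := by
  have hb1 : b - 1 ≠ 0 := by linarith
  have hT' : ∀ t ∈ T, d + 1 - t ∈ Set.Icc 1 d := fun t ht => by
    have := mem_Icc.mp (hT ht); simp only [Set.mem_Icc]; omega
  have hS : ∀ i ∈ Icc 1 T.card, i ∈ Set.Icc 1 d := fun i hi => by
    have := card_le_card hT
    simp only [Nat.card_Icc, add_tsub_cancel_right, mem_Icc, Set.mem_Icc] at this hi ⊢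
    omega
  have hρA : ∀ j ∈ Set.Icc 1 d, ρ j = (d + 1 - j) - (b - 1) * orbitTail w b j := fun j hj =>
    (hρ j).trans (mul_tsum_sub_iterate_div_pow_succ hw.mapsTo hb hj _)
  have hRHS := (hasSum_sum_iterate_succ_div_pow hw.mapsTo hb hT').sub
    (hasSum_sum_iterate_div_pow hw.mapsTo hb hS)
  simp only [← sub_div] at hRHS
  rw [hRHS.tsum_eq, fT_eq_of_eq_sub_mul hT hρA, sum_add_distrib, sum_Icc_one_natCast,
    mul_div_cancel_left₀ _ hb1]

/-- The identity `f_T(ρ⃗_w)/(b−1) = ∑_{n=0}^∞ b^{−n}·(∑_{t∈T} w^{n+1}(d+1−t)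
− ∑_{i=1}^s wⁿ(i))`, where `(ρ⃗_w)_i = (b−1)·∑_{n≥1}(d+1−i−wⁿ(i))/bⁿ`. -/
theorem fT_rho_w_eq (d : ℕ) (hd : 1 ≤ d) (b : ℝ) (hb : 1 < b)
    (w : ℕ → ℕ) (hw : Set.BijOn w (Set.Icc 1 d) (Set.Icc 1 d))
    (T : Finset ℕ) (hT : T ⊆ Finset.Icc 1 d)
    (ρ : ℕ → ℝ)
    (hρ : ∀ i, ρ i = (b - 1) *
      ∑' n : ℕ, (((d : ℝ) + 1 - (i : ℝ)) - (w^[n + 1] i : ℝ)) / b ^ (n + 1)) :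
    fT d b T ρ / (b - 1) =
      ∑' n : ℕ, ((∑ t ∈ T, (w^[n + 1] (d + 1 - t) : ℝ)) -
        ∑ i ∈ Finset.Icc 1 T.card, (w^[n] i : ℝ)) / b ^ n :=
  fT_rho_w_eq_general d b hb w hw T hT ρ hρ
end

section
/- Let d ≥ 2 and b ≥ 2 real. Suppose y = (y₁,…,y_d) ∈ ℝ^d satisfies: (i) y₁ + ⋯ + y_d = 0; (ii) for every s ∈ {1,…,d−1}, (y₁ + ⋯ + y_s) − b·(y_{d+1−s} + ⋯ + y_d) ≥ s(d−s); and (iii) y_i ≤ y_{i+1} + 1 for every i ∈ {1,…,d−1}. Then for every subset T ⊆ {1,…,d} with s = #T, one has (y₁ + ⋯ + y_s) − b·∑_{t∈T} y_{d+1−t} ≥ s(d−s) + b·∑_{t∈T} (t_i − i), where t₁ < ⋯ < t_s are the elements of T listed increasingly; equivalently f_T(y) ≥ 0 with f_T as above. -/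
lemma sum_reflect (d s : ℕ) (hs : s ≤ d) (y : ℕ → ℝ) :
    ∑ t ∈ Finset.Icc 1 s, y (d + 1 - t) = ∑ i ∈ Finset.Icc (d + 1 - s) d, y i := by
  refine Finset.sum_nbij' (fun t => d + 1 - t) (fun i => d + 1 - i) ?_ ?_ ?_ ?_
      (fun a ha => rfl) <;>
    (intro a ha; simp only [Finset.mem_Icc] at *; omega)

lemma gauss (s : ℕ) : (∑ t ∈ Finset.Icc 1 s, (t : ℝ)) = s * (s + 1) / 2 := by
  have h : (∑ t ∈ Finset.Icc 1 s, t) = ∑ t ∈ Finset.range (s + 1), t := by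
    induction s with
    | zero => simp
    | succ k ihk =>
      rw [Finset.sum_range_succ, ← ihk, Finset.sum_Icc_succ_top (by omega : 1 ≤ k + 1)]
  have h2 := Finset.sum_range_id_mul_two (s + 1)
  have : ((∑ t ∈ Finset.Icc 1 s, t : ℕ) : ℝ) * 2 = (s + 1) * s := by
    rw [h]; exact_mod_cast congrArg (Nat.cast : ℕ → ℝ) h2
  push_cast at this ⊢
  linarith

lemma base (d : ℕ) (b : ℝ) (y : ℕ → ℝ)
    (h1 : ∑ i ∈ Finset.Icc 1 d, y i = 0)
    (h2 : ∀ s ∈ Finset.Icc 1 (d - 1),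
      (s : ℝ) * ((d : ℝ) - s) ≤
        (∑ i ∈ Finset.Icc 1 s, y i) - b * ∑ i ∈ Finset.Icc (d + 1 - s) d, y i)
    (s : ℕ) (hs : s ≤ d) : 0 ≤ fT d b (Finset.Icc 1 s) y := by
  have hcard : (Finset.Icc 1 s).card = s := by rw [Nat.card_Icc]; omega
  unfold fT
  rw [hcard, sum_reflect d s hs, gauss]
  simp only [sub_self, mul_zero, add_zero]
  rcases eq_or_lt_of_le hs with h | h
  · subst h
    have h0 : Finset.Icc (s + 1 - s) s = Finset.Icc 1 s := by congr 1; omega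
    rw [h0, h1]
    simp
  · rcases Nat.eq_zero_or_pos s with h0 | h0
    · subst h0; simp
    · have := h2 s (by simp; omega)
      linarith

lemma swap (d : ℕ) (b : ℝ) (hb : 0 ≤ b) (y : ℕ → ℝ)
    (h3 : ∀ i ∈ Finset.Icc 1 (d - 1), y i ≤ y (i + 1) + 1)
    (T : Finset ℕ) (hT : T ⊆ Finset.Icc 1 d) (t : ℕ) (ht : t ∈ T)
    (ht2 : 2 ≤ t) (htm : t - 1 ∉ T) :
    fT d b (insert (t - 1) (T.erase t)) y ≤ fT d b T y := by
  classical
  have htd : t ≤ d := by have := hT ht; simp [Finset.mem_Icc] at this; omega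
  have hnm : t - 1 ∉ T.erase t := fun h => htm (Finset.mem_of_mem_erase h)
  have hcard : (insert (t - 1) (T.erase t)).card = T.card := by
    rw [Finset.card_insert_of_notMem hnm, Finset.card_erase_of_mem ht]
    have : 1 ≤ T.card := Finset.card_pos.mpr ⟨t, ht⟩
    omega
  have hs1 : ∀ g : ℕ → ℝ, ∑ u ∈ insert (t - 1) (T.erase t), g u
      = g (t - 1) + (∑ u ∈ T, g u - g t) := by
    intro g
    rw [Finset.sum_insert hnm, Finset.sum_erase_eq_sub ht]
  have hiy := h3 (d + 1 - t) (by simp [Finset.mem_Icc]; omega)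
  have hidx : d + 1 - (t - 1) = (d + 1 - t) + 1 := by omega
  have hcast : ((t - 1 : ℕ) : ℝ) = (t : ℝ) - 1 := by
    have : 1 ≤ t := by omega
    push_cast [this]; ring
  unfold fT
  rw [hcard, hs1, hs1, hidx, hcast]
  have hby : b * (y ((d + 1 - t) + 1) + 1 - y (d + 1 - t)) ≥ 0 := by
    apply mul_nonneg hb; linarith
  nlinarith [hby]

lemma downclosed (d : ℕ) (T : Finset ℕ) (hT : T ⊆ Finset.Icc 1 d)
    (h : ∀ t ∈ T, t ≠ 1 → t - 1 ∈ T) : T = Finset.Icc 1 T.card := by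
  classical
  have desc : ∀ t, t ∈ T → ∀ u, 1 ≤ u → u ≤ t → u ∈ T := by
    intro t
    induction t using Nat.strong_induction_on with
    | _ t ih =>
      intro ht u hu1 hut
      rcases eq_or_lt_of_le hut with h' | h'
      · subst h'; exact ht
      · have ht1 : t ≠ 1 := by omega
        exact ih (t - 1) (by omega) (h t ht ht1) u hu1 (by omega)
  rcases T.eq_empty_or_nonempty with he | hne
  · subst he; simp
  · have hm := T.max'_mem hne
    have hTeq : T = Finset.Icc 1 (T.max' hne) := by
      ext u
      simp only [Finset.mem_Icc]
      constructor
      · intro hu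
        exact ⟨by have := hT hu; simp [Finset.mem_Icc] at this; omega, T.le_max' u hu⟩
      · intro ⟨h1, h2⟩
        exact desc _ hm u h1 h2
    have : T.card = T.max' hne := by
      conv_lhs => rw [hTeq]
      rw [Nat.card_Icc]; omega
    rw [this, ← hTeq]

/-- If `∑ y_i = 0`, the `d−1` special inequalities
`(y₁+⋯+y_s) − b·(y_{d+1−s}+⋯+y_d) ≥ s(d−s)` hold, and `y_i ≤ y_{i+1} + 1` for
all `i`, then `f_T(y) ≥ 0` for every `T ⊆ {1,…,d}`. -/
theorem fT_nonneg_of_special (d : ℕ) (hd : 2 ≤ d) (b : ℝ) (hb : 2 ≤ b)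
    (y : ℕ → ℝ)
    (h1 : ∑ i ∈ Finset.Icc 1 d, y i = 0)
    (h2 : ∀ s ∈ Finset.Icc 1 (d - 1),
      (s : ℝ) * ((d : ℝ) - s) ≤
        (∑ i ∈ Finset.Icc 1 s, y i) - b * ∑ i ∈ Finset.Icc (d + 1 - s) d, y i)
    (h3 : ∀ i ∈ Finset.Icc 1 (d - 1), y i ≤ y (i + 1) + 1)
    (T : Finset ℕ) (hT : T ⊆ Finset.Icc 1 d) :
    0 ≤ fT d b T y := by
  classical
  have hb0 : (0 : ℝ) ≤ b := by linarith
  have key : ∀ n : ℕ, ∀ T : Finset ℕ, T ⊆ Finset.Icc 1 d → (∑ t ∈ T, t) = n →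
      0 ≤ fT d b T y := by
    intro n
    induction n using Nat.strong_induction_on with
    | _ n ih =>
      intro T hT hsum
      by_cases hcase : ∀ t ∈ T, t ≠ 1 → t - 1 ∈ T
      · rw [downclosed d T hT hcase]
        apply base d b y h1 h2
        calc T.card ≤ (Finset.Icc 1 d).card := Finset.card_le_card hT
        _ = d := by rw [Nat.card_Icc]; omega
      · push_neg at hcase
        obtain ⟨t, ht, ht1, htm⟩ := hcase
        have ht2 : 2 ≤ t := by
          have := hT ht; simp [Finset.mem_Icc] at this; omega
        have htd : t ≤ d := by
          have := hT ht; simp [Finset.mem_Icc] at this; omega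
        have hnm : t - 1 ∉ T.erase t := fun h => htm (Finset.mem_of_mem_erase h)
        have hT' : insert (t - 1) (T.erase t) ⊆ Finset.Icc 1 d := by
          intro u hu
          rcases Finset.mem_insert.mp hu with h | h
          · subst h; simp [Finset.mem_Icc]; omega
          · exact hT (Finset.mem_of_mem_erase h)
        have hsum' : (∑ u ∈ insert (t - 1) (T.erase t), u) < n := by
          rw [Finset.sum_insert hnm]
          have he : t + ∑ u ∈ T.erase t, u = n := by
            rw [Finset.add_sum_erase T (fun x => x) ht]
            exact hsum
          omega
        exact le_trans (ih _ hsum' _ hT' rfl)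
          (swap d b hb0 y h3 T hT t ht ht2 htm)
  exact key _ T hT rfl
end
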